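/- Let 𝒳 be a finite nonempty set and n ≥ 1. Let Z, W, Y₁,…,Yₙ, A be random variables, each taking finitely many values on a common finite probability space, such that: (i) Z is uniformly distributed over 𝒳; (ii) W is independent of Z; (iii) Y₁,…,Yₙ are mutually conditionally independent given the pair (Z,W); (iv) A = g(Y₁,…,Yₙ,W) for some (deterministic) function g, A takes values in 𝒳, and Pr[A = Z] ≥ 3/4. Then there exists an index i ∈ {1,…,n} such that I((Yᵢ,W);Z) ≥ (1/n)·((3/4)·log₂|𝒳| − 1). -/

import Mathlib

open scoped Classical
open Finset

/-- Probability of an event `E` under a weight function `p` on a finite sample space. -/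
noncomputable def prEv {Ω : Type*} [Fintype Ω] (p : Ω → ℝ) (E : Ω → Prop) : ℝ :=
  ∑ ω, if E ω then p ω else 0

/-- Shannon entropy (base 2) of a random variable `X` on a finite probability space,
with the convention `0 · log₂ 0 = 0` (automatic since `Real.logb 2 0 = 0`). -/
noncomputable def ent {Ω S : Type*} [Fintype Ω] [Fintype S] (p : Ω → ℝ) (X : Ω → S) : ℝ :=
  -∑ s : S, prEv p (fun ω => X ω = s) * Real.logb 2 (prEv p (fun ω => X ω = s))

/-- Conditional Shannon entropy `H(X|Y)` (base 2). -/
noncomputable def condEnt {Ω S T : Type*} [Fintype Ω] [Fintype S] [Fintype T]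
    (p : Ω → ℝ) (X : Ω → S) (Y : Ω → T) : ℝ :=
  -∑ s : S, ∑ t : T, prEv p (fun ω => X ω = s ∧ Y ω = t) *
      Real.logb 2 (prEv p (fun ω => X ω = s ∧ Y ω = t) / prEv p (fun ω => Y ω = t))

/-- Mutual information `I(X;Y) = H(X) - H(X|Y)`. -/
noncomputable def mi {Ω S T : Type*} [Fintype Ω] [Fintype S] [Fintype T]
    (p : Ω → ℝ) (X : Ω → S) (Y : Ω → T) : ℝ :=
  ent p X - condEnt p X Y

/-- Conditional mutual information `I(X;Y|Z) = H(X|Z) - H(X|(Y,Z))`. -/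
noncomputable def cmi {Ω S T U : Type*} [Fintype Ω] [Fintype S] [Fintype T] [Fintype U]
    (p : Ω → ℝ) (X : Ω → S) (Y : Ω → T) (Z : Ω → U) : ℝ :=
  condEnt p X Z - condEnt p X (fun ω => (Y ω, Z ω))

/-!
Since `Z` is uniform, `H(Z) = log₂ |𝒳|`; since `A` is a function of `T = ((Yᵢ)ᵢ, W)`, data
processing and Fano's inequality give `H(Z | T) ≤ H(Z | A) ≤ 1 + ¼ log₂ |𝒳|`, hence
`I(Z; T) ≥ ¾ log₂ |𝒳| - 1`. Independence of `Z` and `W` together with the conditional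
independence of the `Yᵢ` given `(Z, W)` makes mutual information subadditive,
`I(Z; T) ≤ ∑ᵢ I(Z; (Yᵢ, W))`: pointwise, `pmi(Z; T) - ∑ᵢ pmi(Z; (Yᵢ, W))` is `log₂ (q(T) / P(T))`,
where `q` is the law `T` would have if the `Yᵢ` were conditionally independent given `W` alone,
and Gibbs' inequality makes its expectation nonpositive. Some party carries at least the average.
-/

open Real

section Probability

variable {Ω T : Type*} [Fintype Ω] {p : Ω → ℝ}

noncomputable def pmfAt (p : Ω → ℝ) (X : Ω → T) (ω : Ω) : ℝ :=
  prEv p (fun ω' => X ω' = X ω)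

noncomputable def pmi {S : Type*} (p : Ω → ℝ) (X : Ω → S) (Y : Ω → T) (ω : Ω) : ℝ :=
  logb 2 (pmfAt p (fun ω => (X ω, Y ω)) ω / (pmfAt p X ω * pmfAt p Y ω))

def IndepRV {S : Type*} (p : Ω → ℝ) (X : Ω → S) (Y : Ω → T) : Prop :=
  ∀ s t, prEv p (fun ω => X ω = s ∧ Y ω = t) = prEv p (fun ω => X ω = s) * prEv p (fun ω => Y ω = t)

lemma prEv_congr {E F : Ω → Prop} (h : ∀ ω, E ω ↔ F ω) : prEv p E = prEv p F :=
  congrArg (prEv p) (funext fun ω => propext (h ω))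

lemma prEv_nonneg (hp : ∀ ω, 0 ≤ p ω) (E : Ω → Prop) : 0 ≤ prEv p E :=
  Finset.sum_nonneg fun ω _ => by split <;> simp [hp ω]

lemma prEv_mono (hp : ∀ ω, 0 ≤ p ω) {E F : Ω → Prop} (h : ∀ ω, E ω → F ω) :
    prEv p E ≤ prEv p F :=
  Finset.sum_le_sum fun ω _ => by
    by_cases hE : E ω
    · simp [hE, h ω hE]
    · simp only [hE, if_false]; split <;> simp [hp ω]

lemma le_prEv (hp : ∀ ω, 0 ≤ p ω) {E : Ω → Prop} {ω : Ω} (hω : E ω) : p ω ≤ prEv p E := by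
  have := Finset.single_le_sum (f := fun ω => if E ω then p ω else 0)
    (fun ω _ => by split <;> simp [hp ω]) (Finset.mem_univ ω)
  simpa [prEv, hω] using this

lemma exists_pos_of_prEv_pos {E : Ω → Prop} (h : 0 < prEv p E) : ∃ ω, E ω ∧ 0 < p ω := by
  obtain ⟨ω, -, hω⟩ := Finset.exists_lt_of_sum_lt (f := fun _ => (0 : ℝ)) (by simpa [prEv] using h)
  by_cases hE : E ω
  · exact ⟨ω, hE, by simpa [hE] using hω⟩
  · simp [hE] at hω

lemma pmfAt_pos (hp : ∀ ω, 0 ≤ p ω) (X : Ω → T) {ω : Ω} (hω : 0 < p ω) : 0 < pmfAt p X ω :=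
  hω.trans_le (le_prEv hp rfl)

lemma prEv_not (hsum : ∑ ω, p ω = 1) (E : Ω → Prop) :
    prEv p (fun ω => ¬ E ω) = 1 - prEv p E := by
  rw [eq_sub_iff_add_eq, ← hsum, prEv, prEv, ← Finset.sum_add_distrib]
  exact Finset.sum_congr rfl fun ω _ => by by_cases h : E ω <;> simp [h]

lemma sum_prEv_mul [Fintype T] (X : Ω → T) (φ : T → ℝ) :
    ∑ t, prEv p (fun ω => X ω = t) * φ t = ∑ ω, p ω * φ (X ω) := by
  simp only [prEv, Finset.sum_mul, ite_mul, zero_mul]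
  rw [Finset.sum_comm]
  simp

lemma sum_prEv_eq_one [Fintype T] (hsum : ∑ ω, p ω = 1) (X : Ω → T) :
    ∑ t, prEv p (fun ω => X ω = t) = 1 := by
  simpa [hsum] using sum_prEv_mul (p := p) X (fun _ => 1)

lemma prEv_eq_sum_filter [Fintype T] (X : Ω → T) (P : T → Prop) [DecidablePred P] :
    prEv p (fun ω => P (X ω)) = ∑ t ∈ Finset.univ.filter P, prEv p (fun ω => X ω = t) := by
  have h := sum_prEv_mul (p := p) X (fun t => if P t then 1 else 0)
  simp only [mul_ite, mul_one, mul_zero] at h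
  rw [Finset.sum_filter, h, prEv]
  exact Finset.sum_congr rfl fun ω _ => by congr

lemma sum_prEv_pair_fst {U : Type*} [Fintype T] (X : Ω → T) (Y : Ω → U) (u : U) :
    ∑ t, prEv p (fun ω => (X ω, Y ω) = (t, u)) = prEv p (fun ω => Y ω = u) := by
  simp only [prEv]
  rw [Finset.sum_comm]
  refine Finset.sum_congr rfl fun ω _ => ?_
  by_cases h : Y ω = u <;> simp [h, Prod.ext_iff]

end Probability

section Entropy

variable {Ω S T : Type*} [Fintype Ω] [Fintype S] [Fintype T] {p : Ω → ℝ}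

lemma ent_eq_sum (X : Ω → S) : ent p X = -∑ ω, p ω * logb 2 (pmfAt p X ω) := by
  rw [ent, sum_prEv_mul X (fun s => logb 2 (prEv p (fun ω => X ω = s)))]
  rfl

lemma condEnt_eq_sum_pair (X : Ω → S) (Y : Ω → T) :
    condEnt p X Y = ∑ x : S × T, prEv p (fun ω => (X ω, Y ω) = x) *
      logb 2 (prEv p (fun ω => Y ω = x.2) / prEv p (fun ω => (X ω, Y ω) = x)) := by
  have hpair : ∀ s t, prEv p (fun ω => X ω = s ∧ Y ω = t) = prEv p (fun ω => (X ω, Y ω) = (s, t)) :=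
    fun s t => prEv_congr fun ω => Prod.mk_inj.symm
  simp_rw [condEnt, hpair, Fintype.sum_prod_type, ← Finset.sum_neg_distrib, ← mul_neg,
    ← logb_inv, inv_div]

lemma condEnt_eq_sum (X : Ω → S) (Y : Ω → T) :
    condEnt p X Y = ∑ ω, p ω * logb 2 (pmfAt p Y ω / pmfAt p (fun ω => (X ω, Y ω)) ω) := by
  rw [condEnt_eq_sum_pair, sum_prEv_mul (fun ω => (X ω, Y ω))
    (fun x => logb 2 (prEv p (fun ω => Y ω = x.2) / prEv p (fun ω => (X ω, Y ω) = x)))]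
  rfl

lemma mi_eq_sum (hp : ∀ ω, 0 ≤ p ω) (X : Ω → S) (Y : Ω → T) :
    mi p X Y = ∑ ω, p ω * pmi p X Y ω := by
  rw [mi, ent_eq_sum, condEnt_eq_sum, ← sub_eq_zero, ← Finset.sum_neg_distrib,
    ← Finset.sum_sub_distrib, ← Finset.sum_sub_distrib]
  refine Finset.sum_eq_zero fun ω _ => ?_
  rcases (hp ω).eq_or_lt with h0 | hω
  · simp [← h0]
  have hX := pmfAt_pos hp X hω
  have hY := pmfAt_pos hp Y hω
  have hXY := pmfAt_pos hp (fun ω => (X ω, Y ω)) hω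
  rw [pmi, logb_div hY.ne' hXY.ne', logb_div hXY.ne' (by positivity), logb_mul hX.ne' hY.ne']
  ring

lemma mi_comm (hp : ∀ ω, 0 ≤ p ω) (X : Ω → S) (Y : Ω → T) : mi p X Y = mi p Y X := by
  have hswap : ∀ ω, pmfAt p (fun ω => (X ω, Y ω)) ω = pmfAt p (fun ω => (Y ω, X ω)) ω :=
    fun ω => prEv_congr fun ω' => by simp only [Prod.ext_iff, and_comm]
  simp_rw [mi_eq_sum hp, pmi, hswap, mul_comm (pmfAt p X _)]

lemma ent_eq_logb_card (hsum : ∑ ω, p ω = 1) (X : Ω → S)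
    (hunif : ∀ s, prEv p (fun ω => X ω = s) = 1 / Fintype.card S) :
    ent p X = logb 2 (Fintype.card S) := by
  simp_rw [ent_eq_sum, pmfAt, hunif, ← Finset.sum_mul, hsum, one_div, logb_inv]
  ring

end Entropy

lemma mul_log_div_le {a b c B : ℝ} (ha : 0 ≤ a) (hb : 0 ≤ b) (hab : 0 < a → 0 < b)
    (hc : 0 < c) (hB : 0 < B) : a * log (b / a) ≤ c / B * b - a + a * log (B / c) := by
  rcases ha.eq_or_lt with rfl | ha
  · simp only [zero_mul, sub_zero, add_zero]; positivity
  have hb := hab ha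
  have hsplit : log (b / a) = log (b * c / (a * B)) + log (B / c) := by
    rw [← log_mul (by positivity) (by positivity)]
    congr 1
    field_simp
  have htangent := mul_le_mul_of_nonneg_left
    (log_le_sub_one_of_pos (by positivity : 0 < b * c / (a * B))) ha.le
  have hlin : a * (b * c / (a * B) - 1) = c / B * b - a := by field_simp
  rw [hsplit, mul_add]
  linarith

/-- The log-sum inequality, with `∑ b` replaced by any upper bound `B`. -/
lemma sum_mul_logb_div_le {ι : Type*} (s : Finset ι) (a b : ι → ℝ) {B : ℝ}
    (ha : ∀ i ∈ s, 0 ≤ a i) (hb : ∀ i ∈ s, 0 ≤ b i) (hab : ∀ i ∈ s, 0 < a i → 0 < b i)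
    (hB : ∑ i ∈ s, b i ≤ B) :
    ∑ i ∈ s, a i * logb 2 (b i / a i) ≤ (∑ i ∈ s, a i) * logb 2 (B / ∑ i ∈ s, a i) := by
  set c := ∑ i ∈ s, a i
  rcases (Finset.sum_nonneg ha).eq_or_lt with hc | hc
  · have hzero := (Finset.sum_eq_zero_iff_of_nonneg ha).mp hc.symm
    rw [show c = 0 from hc.symm, zero_mul]
    exact (Finset.sum_eq_zero fun i hi => by rw [hzero i hi, zero_mul]).le
  obtain ⟨j, hj, haj⟩ := Finset.exists_lt_of_sum_lt (f := fun _ => (0 : ℝ)) (by simpa using hc)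
  have hBpos : 0 < B := ((hab j hj haj).trans_le (Finset.single_le_sum hb hj)).trans_le hB
  have hlog : ∑ i ∈ s, a i * log (b i / a i) ≤ c * log (B / c) :=
    calc ∑ i ∈ s, a i * log (b i / a i)
        ≤ ∑ i ∈ s, (c / B * b i - a i + a i * log (B / c)) :=
          Finset.sum_le_sum fun i hi => mul_log_div_le (ha i hi) (hb i hi) (hab i hi) hc hBpos
      _ = c / B * ∑ i ∈ s, b i - c + c * log (B / c) := by
          rw [Finset.sum_add_distrib, Finset.sum_sub_distrib, ← Finset.mul_sum, ← Finset.sum_mul]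
      _ ≤ c / B * B - c + c * log (B / c) := by gcongr
      _ = c * log (B / c) := by field_simp; ring
  simp only [logb, ← mul_div_assoc, ← Finset.sum_div]
  exact div_le_div_of_nonneg_right hlog (log_nonneg one_le_two)

section Gibbs

variable {Ω T : Type*} [Fintype Ω] [Fintype T] {p : Ω → ℝ}

lemma sum_mul_logb_div_pmfAt_nonpos (hp : ∀ ω, 0 ≤ p ω) (hsum : ∑ ω, p ω = 1) (X : Ω → T)
    (b : T → ℝ) (hb : ∀ t, 0 ≤ b t) (hb_sum : ∑ t, b t ≤ 1)
    (hb_pos : ∀ ω, 0 < p ω → 0 < b (X ω)) :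
    ∑ ω, p ω * logb 2 (b (X ω) / pmfAt p X ω) ≤ 0 := by
  have h := sum_mul_logb_div_le Finset.univ (fun t => prEv p (fun ω => X ω = t)) b
    (fun t _ => prEv_nonneg hp _) (fun t _ => hb t) (fun t _ ht => ?_) hb_sum
  · rw [sum_prEv_eq_one hsum, div_one, logb_one, mul_zero,
      sum_prEv_mul X (fun t => logb 2 (b t / prEv p (fun ω => X ω = t)))] at h
    exact h
  · obtain ⟨ω, rfl, hω⟩ := exists_pos_of_prEv_pos ht
    exact hb_pos ω hω

end Gibbs

section DataProcessing

variable {Ω S T U : Type*} [Fintype Ω] [Fintype S] [Fintype T] [Fintype U] {p : Ω → ℝ}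

lemma condEnt_le_condEnt_comp (hp : ∀ ω, 0 ≤ p ω) (hsum : ∑ ω, p ω = 1)
    (X : Ω → S) (Y : Ω → T) (f : T → U) :
    condEnt p X Y ≤ condEnt p X (fun ω => f (Y ω)) := by
  set b : S × T → ℝ := fun x => prEv p (fun ω => Y ω = x.2) *
    prEv p (fun ω => (X ω, f (Y ω)) = (x.1, f x.2)) / prEv p (fun ω => f (Y ω) = f x.2)
  have hb : ∀ x, 0 ≤ b x := fun x =>
    div_nonneg (mul_nonneg (prEv_nonneg hp _) (prEv_nonneg hp _)) (prEv_nonneg hp _)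
  have hb_sum : ∑ x, b x ≤ 1 := by
    simp_rw [b, Fintype.sum_prod_type_right, mul_div_assoc, ← Finset.mul_sum, ← Finset.sum_div,
      sum_prEv_pair_fst]
    calc _ ≤ ∑ t, prEv p (fun ω => Y ω = t) :=
          Finset.sum_le_sum fun t _ => mul_le_of_le_one_right (prEv_nonneg hp _) (div_self_le_one _)
      _ = 1 := sum_prEv_eq_one hsum Y
  rw [← sub_nonpos, condEnt_eq_sum, condEnt_eq_sum, ← Finset.sum_sub_distrib]
  calc _ = ∑ ω, p ω * logb 2 (b (X ω, Y ω) / pmfAt p (fun ω => (X ω, Y ω)) ω) := by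
        refine Finset.sum_congr rfl fun ω _ => ?_
        rcases (hp ω).eq_or_lt with h0 | hω
        · simp [← h0]
        have hY := pmfAt_pos hp Y hω
        have hXY := pmfAt_pos hp (fun ω => (X ω, Y ω)) hω
        have hfY := pmfAt_pos hp (fun ω => f (Y ω)) hω
        have hXfY := pmfAt_pos hp (fun ω => (X ω, f (Y ω))) hω
        rw [← mul_sub, ← logb_div (by positivity) (by positivity)]
        congr 2
        simp only [b, pmfAt]
        field_simp
    _ ≤ 0 := sum_mul_logb_div_pmfAt_nonpos hp hsum _ b hb hb_sum fun ω hω =>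
        div_pos (mul_pos (pmfAt_pos hp Y hω) (pmfAt_pos hp (fun ω => (X ω, f (Y ω))) hω))
          (pmfAt_pos hp (fun ω => f (Y ω)) hω)

end DataProcessing

lemma mul_logb_one_div_add_mul_logb_div_le (e : ℝ) {N : ℝ} (hN : N ≠ 0) :
    (1 - e) * logb 2 (1 / (1 - e)) + e * logb 2 (N / e) ≤ 1 + e * logb 2 N := by
  have hbin : (1 - e) * logb 2 (1 / (1 - e)) + e * logb 2 (1 / e) ≤ 1 := by
    have hlog2 : 0 < log 2 := log_pos one_lt_two
    have h : (1 - e) * logb 2 (1 / (1 - e)) + e * logb 2 (1 / e) = binEntropy e / log 2 := by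
      simp only [binEntropy, logb, one_div]; ring
    rw [h, div_le_one hlog2]
    exact binEntropy_le_log_two
  have hsplit : e * logb 2 (N / e) = e * logb 2 N + e * logb 2 (1 / e) := by
    rcases eq_or_ne e 0 with rfl | he
    · simp
    rw [logb_div hN he, one_div, logb_inv]
    ring
  linarith

section Fano

variable {Ω 𝒳 : Type*} [Fintype Ω] [Fintype 𝒳] [Nonempty 𝒳] {p : Ω → ℝ}

/-- A weak form of Fano's inequality. -/
theorem condEnt_le_one_add_prEv_ne_mul_logb_card (hp : ∀ ω, 0 ≤ p ω) (hsum : ∑ ω, p ω = 1)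
    (Z A : Ω → 𝒳) :
    condEnt p Z A ≤ 1 + prEv p (fun ω => A ω ≠ Z ω) * logb 2 (Fintype.card 𝒳) := by
  rw [condEnt_eq_sum_pair, ← Finset.sum_filter_add_sum_filter_not _ (fun x : 𝒳 × 𝒳 => x.2 = x.1)]
  set J : 𝒳 × 𝒳 → ℝ := fun x => prEv p (fun ω => (Z ω, A ω) = x)
  set PA : 𝒳 × 𝒳 → ℝ := fun x => prEv p (fun ω => A ω = x.2)
  have hJ : ∀ x, 0 ≤ J x := fun x => prEv_nonneg hp _
  have hPA : ∀ x, 0 ≤ PA x := fun x => prEv_nonneg hp _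
  have hJPA : ∀ x, 0 < J x → 0 < PA x := fun x hx =>
    hx.trans_le (prEv_mono hp fun ω h => by rw [← h])
  have hdiag := sum_mul_logb_div_le (Finset.univ.filter fun x : 𝒳 × 𝒳 => x.2 = x.1) J PA
    (fun x _ => hJ x) (fun x _ => hPA x) (fun x _ => hJPA x) (B := 1) (by
      rw [Finset.sum_filter, Fintype.sum_prod_type]
      simp only [PA, Finset.sum_ite_eq', Finset.mem_univ, if_true]
      exact (sum_prEv_eq_one hsum A).le)
  have hoff := sum_mul_logb_div_le (Finset.univ.filter fun x : 𝒳 × 𝒳 => ¬ x.2 = x.1) J PA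
    (fun x _ => hJ x) (fun x _ => hPA x) (fun x _ => hJPA x) (B := Fintype.card 𝒳) (by
      refine (Finset.sum_le_univ_sum_of_nonneg hPA).trans_eq ?_
      simp only [PA, Fintype.sum_prod_type, sum_prEv_eq_one hsum A, Finset.sum_const,
        Finset.card_univ, nsmul_eq_mul, mul_one])
  have hcorrect : ∑ x ∈ Finset.univ.filter (fun x : 𝒳 × 𝒳 => x.2 = x.1), J x =
      prEv p (fun ω => A ω = Z ω) := (prEv_eq_sum_filter _ _).symm
  have herror : ∑ x ∈ Finset.univ.filter (fun x : 𝒳 × 𝒳 => ¬ x.2 = x.1), J x =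
      prEv p (fun ω => A ω ≠ Z ω) := (prEv_eq_sum_filter _ _).symm
  have hcompl : prEv p (fun ω => A ω = Z ω) = 1 - prEv p (fun ω => A ω ≠ Z ω) := by
    rw [prEv_not hsum, sub_sub_cancel]
  rw [hcorrect, hcompl] at hdiag
  rw [herror] at hoff
  linarith [mul_logb_one_div_add_mul_logb_div_le (prEv p (fun ω => A ω ≠ Z ω))
    (N := Fintype.card 𝒳) (Nat.cast_ne_zero.mpr Fintype.card_ne_zero)]

end Fano

section Superadditivity

variable {Ω ι 𝒳 S V : Type*} [Fintype Ω] [Fintype ι] {p : Ω → ℝ}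

def CondIndepRV (p : Ω → ℝ) (Y : ι → Ω → S) (Z : Ω → 𝒳) (W : Ω → V) : Prop :=
  ∀ (y : ι → S) (x : 𝒳) (w : V),
    0 < prEv p (fun ω => Z ω = x ∧ W ω = w) →
    prEv p (fun ω => (∀ i, Y i ω = y i) ∧ (Z ω = x ∧ W ω = w)) /
        prEv p (fun ω => Z ω = x ∧ W ω = w) =
      ∏ i, (prEv p (fun ω => Y i ω = y i ∧ (Z ω = x ∧ W ω = w)) /
        prEv p (fun ω => Z ω = x ∧ W ω = w))

/-- The law of `((Yᵢ)ᵢ, W)` if the `Yᵢ` were conditionally independent given `W` alone. -/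
noncomputable def condIndepPmf (p : Ω → ℝ) (Y : ι → Ω → S) (W : Ω → V) (t : (ι → S) × V) : ℝ :=
  prEv p (fun ω => W ω = t.2) *
    ∏ i, (prEv p (fun ω => (Y i ω, W ω) = (t.1 i, t.2)) / prEv p (fun ω => W ω = t.2))

lemma condIndepPmf_nonneg (hp : ∀ ω, 0 ≤ p ω) (Y : ι → Ω → S) (W : Ω → V) (t : (ι → S) × V) :
    0 ≤ condIndepPmf p Y W t :=
  mul_nonneg (prEv_nonneg hp _)
    (Finset.prod_nonneg fun _ _ => div_nonneg (prEv_nonneg hp _) (prEv_nonneg hp _))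

lemma condIndepPmf_pos (hp : ∀ ω, 0 ≤ p ω) (Y : ι → Ω → S) (W : Ω → V) {ω : Ω} (hω : 0 < p ω) :
    0 < condIndepPmf p Y W ((fun i => Y i ω), W ω) :=
  mul_pos (pmfAt_pos hp W hω) (Finset.prod_pos fun i _ =>
    div_pos (pmfAt_pos hp (fun ω => (Y i ω, W ω)) hω) (pmfAt_pos hp W hω))

lemma sum_condIndepPmf_le_one [DecidableEq ι] [Fintype S] [Fintype V] (hp : ∀ ω, 0 ≤ p ω)
    (hsum : ∑ ω, p ω = 1) (Y : ι → Ω → S) (W : Ω → V) : ∑ t, condIndepPmf p Y W t ≤ 1 := by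
  simp_rw [condIndepPmf, Fintype.sum_prod_type_right, ← Finset.mul_sum]
  calc _ ≤ ∑ w, prEv p (fun ω => W ω = w) := Finset.sum_le_sum fun w _ => by
        rw [← Fintype.prod_sum fun i s =>
          prEv p (fun ω => (Y i ω, W ω) = (s, w)) / prEv p (fun ω => W ω = w)]
        simp_rw [← Finset.sum_div, sum_prEv_pair_fst, Finset.prod_const]
        exact mul_le_of_le_one_right (prEv_nonneg hp _)
          (pow_le_one₀ (div_nonneg (prEv_nonneg hp _) (prEv_nonneg hp _)) (div_self_le_one _))
    _ = 1 := sum_prEv_eq_one hsum W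

lemma CondIndepRV.pmfAt_div_eq_prod {Z : Ω → 𝒳} {W : Ω → V} {Y : ι → Ω → S}
    (hci : CondIndepRV p Y Z W) (hp : ∀ ω, 0 ≤ p ω) (hindep : IndepRV p Z W) {ω : Ω}
    (hω : 0 < p ω) :
    pmfAt p (fun ω => (Z ω, ((fun i => Y i ω), W ω))) ω / (pmfAt p Z ω * pmfAt p W ω) =
      ∏ i, (pmfAt p (fun ω => (Z ω, (Y i ω, W ω))) ω / (pmfAt p Z ω * pmfAt p W ω)) := by
  have hZT : pmfAt p (fun ω => (Z ω, ((fun i => Y i ω), W ω))) ω =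
      prEv p (fun ω' => (∀ i, Y i ω' = Y i ω) ∧ (Z ω' = Z ω ∧ W ω' = W ω)) :=
    prEv_congr fun ω' => by simp only [Prod.ext_iff, funext_iff]; tauto
  have hZTi : ∀ i, pmfAt p (fun ω => (Z ω, (Y i ω, W ω))) ω =
      prEv p (fun ω' => Y i ω' = Y i ω ∧ (Z ω' = Z ω ∧ W ω' = W ω)) :=
    fun i => prEv_congr fun ω' => by simp only [Prod.ext_iff]; tauto
  have h := hci (fun i => Y i ω) (Z ω) (W ω) (hω.trans_le (le_prEv hp ⟨rfl, rfl⟩))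
  simp only [← hZT, ← hZTi, hindep (Z ω) (W ω)] at h
  exact h

lemma pmi_sub_sum_pmi (hp : ∀ ω, 0 ≤ p ω) (Z : Ω → 𝒳) (W : Ω → V) (Y : ι → Ω → S)
    (hindep : IndepRV p Z W) (hci : CondIndepRV p Y Z W)
    {ω : Ω} (hω : 0 < p ω) :
    pmi p Z (fun ω => ((fun i => Y i ω), W ω)) ω - ∑ i, pmi p Z (fun ω => (Y i ω, W ω)) ω =
      logb 2 (condIndepPmf p Y W ((fun i => Y i ω), W ω) /
        pmfAt p (fun ω => ((fun i => Y i ω), W ω)) ω) := by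
  have hprod := hci.pmfAt_div_eq_prod hp hindep hω
  have hZ := pmfAt_pos hp Z hω
  have hW := pmfAt_pos hp W hω
  have hT := pmfAt_pos hp (fun ω => ((fun i => Y i ω), W ω)) hω
  have hZT := pmfAt_pos hp (fun ω => (Z ω, ((fun i => Y i ω), W ω))) hω
  have hfactor_pos : ∀ i, 0 < pmfAt p (fun ω => (Z ω, (Y i ω, W ω))) ω /
      (pmfAt p Z ω * pmfAt p (fun ω => (Y i ω, W ω)) ω) := fun i =>
    div_pos (pmfAt_pos hp _ hω) (mul_pos hZ (pmfAt_pos hp _ hω))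
  -- each factor is `Pr[Yᵢ | Z, W] / Pr[Yᵢ | W]` at the sample point, as `Pr[Z, W] = Pr[Z] Pr[W]`
  have hfactor : ∀ i, pmfAt p (fun ω => (Z ω, (Y i ω, W ω))) ω /
      (pmfAt p Z ω * pmfAt p (fun ω => (Y i ω, W ω)) ω) =
      (pmfAt p (fun ω => (Z ω, (Y i ω, W ω))) ω / (pmfAt p Z ω * pmfAt p W ω)) /
        (pmfAt p (fun ω => (Y i ω, W ω)) ω / pmfAt p W ω) := fun i => by
    have := pmfAt_pos hp (fun ω => (Y i ω, W ω)) hω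
    field_simp
  have hcond : condIndepPmf p Y W ((fun i => Y i ω), W ω) =
      pmfAt p W ω * ∏ i, (pmfAt p (fun ω => (Y i ω, W ω)) ω / pmfAt p W ω) := rfl
  have hQ : 0 < ∏ i, (pmfAt p (fun ω => (Y i ω, W ω)) ω / pmfAt p W ω) :=
    Finset.prod_pos fun i _ => div_pos (pmfAt_pos hp _ hω) hW
  simp only [pmi]
  rw [← logb_prod _ _ fun i _ => (hfactor_pos i).ne',
    ← logb_div (by positivity) (Finset.prod_pos fun i _ => hfactor_pos i).ne', hcond,
    Finset.prod_congr rfl fun i _ => hfactor i, Finset.prod_div_distrib, ← hprod]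
  congr 1
  field_simp

theorem mi_le_sum_mi [DecidableEq ι] [Fintype 𝒳] [Fintype S] [Fintype V] (hp : ∀ ω, 0 ≤ p ω)
    (hsum : ∑ ω, p ω = 1) (Z : Ω → 𝒳) (W : Ω → V) (Y : ι → Ω → S)
    (hindep : IndepRV p Z W) (hci : CondIndepRV p Y Z W) :
    mi p Z (fun ω => ((fun i => Y i ω), W ω)) ≤ ∑ i, mi p Z (fun ω => (Y i ω, W ω)) := by
  rw [← sub_nonpos]
  simp_rw [mi_eq_sum hp]
  rw [Finset.sum_comm]
  simp_rw [← Finset.mul_sum, ← Finset.sum_sub_distrib, ← mul_sub]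
  calc _ = ∑ ω, p ω * logb 2 (condIndepPmf p Y W ((fun i => Y i ω), W ω) /
        pmfAt p (fun ω => ((fun i => Y i ω), W ω)) ω) :=
        Finset.sum_congr rfl fun ω _ => by
          rcases (hp ω).eq_or_lt with h0 | hω
          · simp [← h0]
          · rw [pmi_sub_sum_pmi hp Z W Y hindep hci hω]
    _ ≤ 0 := sum_mul_logb_div_pmfAt_nonpos hp hsum _ _ (condIndepPmf_nonneg hp Y W)
        (sum_condIndepPmf_le_one hp hsum Y W) fun ω hω => condIndepPmf_pos hp Y W hω

end Superadditivity

/-- If `Z` is uniform over `𝒳`, `W` is independent of `Z`,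
`Y₁,…,Yₙ` are mutually conditionally independent given `(Z,W)`,
and `A = g(Y₁,…,Yₙ,W)` satisfies `Pr[A = Z] ≥ 3/4`, then there is an index `i`
with `I((Yᵢ,W);Z) ≥ (1/n)·((3/4)·log₂|𝒳| − 1)`. -/
theorem exists_party_with_high_mutualInfo
    {Ω 𝒳 S V : Type*} [Fintype Ω] [Fintype 𝒳] [Nonempty 𝒳] [Fintype S] [Fintype V]
    (n : ℕ) (hn : 1 ≤ n)
    (p : Ω → ℝ) (hp : ∀ ω, 0 ≤ p ω) (hsum : ∑ ω, p ω = 1)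
    (Z : Ω → 𝒳) (W : Ω → V) (Y : Fin n → Ω → S) (A : Ω → 𝒳)
    (hunif : ∀ x : 𝒳, prEv p (fun ω => Z ω = x) = 1 / Fintype.card 𝒳)
    (hindep : ∀ (x : 𝒳) (w : V),
      prEv p (fun ω => Z ω = x ∧ W ω = w) =
        prEv p (fun ω => Z ω = x) * prEv p (fun ω => W ω = w))
    (hci : ∀ (y : Fin n → S) (x : 𝒳) (w : V),
      0 < prEv p (fun ω => Z ω = x ∧ W ω = w) →
      prEv p (fun ω => (∀ i, Y i ω = y i) ∧ (Z ω = x ∧ W ω = w)) /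
          prEv p (fun ω => Z ω = x ∧ W ω = w) =
        ∏ i, (prEv p (fun ω => Y i ω = y i ∧ (Z ω = x ∧ W ω = w)) /
          prEv p (fun ω => Z ω = x ∧ W ω = w)))
    (g : (Fin n → S) → V → 𝒳) (hg : ∀ ω, A ω = g (fun i => Y i ω) (W ω))
    (hacc : prEv p (fun ω => A ω = Z ω) ≥ 3 / 4) :
    ∃ i : Fin n, mi p (fun ω => (Y i ω, W ω)) Z ≥
      (1 / (n : ℝ)) * ((3 / 4) * Real.logb 2 (Fintype.card 𝒳) - 1) := by
  have hsuper := mi_le_sum_mi hp hsum Z W Y hindep hci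
  rw [mi, ent_eq_logb_card hsum Z hunif,
    Finset.sum_congr rfl fun i _ => mi_comm hp Z (fun ω => (Y i ω, W ω))] at hsuper
  have hdata := condEnt_le_condEnt_comp hp hsum Z (fun ω => ((fun i => Y i ω), W ω))
    fun t => g t.1 t.2
  simp only [← hg] at hdata
  have hfano := condEnt_le_one_add_prEv_ne_mul_logb_card hp hsum Z A
  have herr : prEv p (fun ω => A ω ≠ Z ω) ≤ 1 / 4 := by
    rw [prEv_not hsum (fun ω => A ω = Z ω)]
    linarith
  have hlog : 0 ≤ logb 2 (Fintype.card 𝒳) :=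
    logb_nonneg one_lt_two (by exact_mod_cast Fintype.card_pos)
  have htotal : (3 / 4) * logb 2 (Fintype.card 𝒳) - 1 ≤ ∑ i, mi p (fun ω => (Y i ω, W ω)) Z := by
    linarith [mul_le_mul_of_nonneg_right herr hlog]
  obtain ⟨i, -, hi⟩ := Finset.exists_le_of_sum_le (s := Finset.univ) ⟨⟨0, hn⟩, Finset.mem_univ _⟩
    (f := fun _ => (1 / (n : ℝ)) * ((3 / 4) * logb 2 (Fintype.card 𝒳) - 1))
    (g := fun i => mi p (fun ω => (Y i ω, W ω)) Z) (by
      rwa [Finset.sum_const, Finset.card_univ, Fintype.card_fin, nsmul_eq_mul, ← mul_assoc,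
        mul_one_div_cancel (by positivity), one_mul])
  exact ⟨i, hi⟩
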